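/- Let k be a field and let ℙ¹(k) denote the projectivization of the plane k². Consider the diagonal action of GL_2(k) on the set Ω of 4-tuples (ℓ_1, ℓ_2, ℓ_3, ℓ_4) of pairwise distinct points of ℙ¹(k). Then the map sending α ∈ k∖{0,1} to the GL_2(k)-orbit of the tuple ([1:0], [0:1], [1:1], [α:1]) is a bijection from k∖{0,1} onto the set of GL_2(k)-orbits in Ω. -/

import Mathlib

/-!
Representatives of two distinct points of `ℙ¹(k)` form a basis of `k²`, and rescaling its two
vectors makes their sum represent any prescribed third point distinct from them; so `GL₂(k)`
moves three distinct points to `[1:0], [0:1], [1:1]`, and the fourth then lands at some `[α:1]`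
with `α ≠ 0, 1`. Conversely, a linear map fixing `[1:0], [0:1], [1:1]` has `e₀`, `e₁`, `e₀ + e₁`
as eigenvectors, hence is a scalar and fixes `[α:1]` too: `α` is an invariant of the orbit.
-/

open scoped LinearAlgebra.Projectivization

noncomputable section

/-- The projective line `ℙ¹(k)`, i.e. the projectivization of `k²`. -/
abbrev ProjLine (k : Type) [Field k] := ℙ k (Fin 2 → k)

/-- The point `[a:b]` of `ℙ¹(k)`, for `(a,b) ≠ 0`. -/
def pt (k : Type) [Field k] (a b : k) (h : ![a, b] ≠ 0) : ProjLine k :=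
  Projectivization.mk k ![a, b] h

/-- Two `4`-tuples of points in `ℙ¹(k)` lie in the same orbit of the (diagonal)
action of `GL₂(k)` iff some linear automorphism of `k²` carries one to the other. -/
def sameOrbit (k : Type) [Field k] (t t' : Fin 4 → ProjLine k) : Prop :=
  ∃ g : (Fin 2 → k) ≃ₗ[k] (Fin 2 → k),
    ∀ i, Projectivization.map g.toLinearMap g.injective (t i) = t' i

/-- The standard tuple `([1:0], [0:1], [1:1], [α:1])`. -/
def stdTuple (k : Type) [Field k] (α : k) : Fin 4 → ProjLine k :=
  ![pt k 1 0 (fun h => one_ne_zero (congrFun h 0)),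
    pt k 0 1 (fun h => one_ne_zero (congrFun h 1)),
    pt k 1 1 (fun h => one_ne_zero (congrFun h 0)),
    pt k α 1 (fun h => one_ne_zero (congrFun h 1))]

open Projectivization Module MulAction

section

variable {k : Type} [Field k]

lemma sameOrbit_eq_orbitRel :
    sameOrbit k = orbitRel ((Fin 2 → k) ≃ₗ[k] (Fin 2 → k)) (Fin 4 → ProjLine k) := by
  ext t t'
  rw [orbitRel_apply, mem_orbit_symm]
  simp only [sameOrbit, mem_orbit_iff, funext_iff]
  rfl

lemma quot_mk_eq_iff_sameOrbit {t t' : Fin 4 → ProjLine k} :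
    Quot.mk (sameOrbit k) t = Quot.mk (sameOrbit k) t' ↔ sameOrbit k t t' :=
  Quot.eq.trans (sameOrbit_eq_orbitRel (k := k) ▸ (orbitRel _ _).iseqv).eqvGen_iff

lemma mul_eq_mul_of_pt_eq_pt {a b c d : k} {hab : ![a, b] ≠ 0} {hcd : ![c, d] ≠ 0}
    (h : pt k a b hab = pt k c d hcd) : a * d = b * c := by
  obtain ⟨s, hs⟩ := (mk_eq_mk_iff' k _ _ _ _).1 h
  have h₀ : s * c = a := by simpa using congrFun hs 0
  have h₁ : s * d = b := by simpa using congrFun hs 1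
  rw [← h₀, ← h₁]
  ring

lemma stdTuple_injective {α : k} (h₀ : α ≠ 0) (h₁ : α ≠ 1) :
    Function.Injective (stdTuple k α) := by
  intro i j hij
  fin_cases i <;> fin_cases j <;> first
    | rfl
    | simpa [stdTuple, eq_comm, h₀, h₁] using mul_eq_mul_of_pt_eq_pt hij

lemma linearEquiv_smul_pt_eq_pt_iff (g : (Fin 2 → k) ≃ₗ[k] (Fin 2 → k)) {a b c d : k}
    {hab : ![a, b] ≠ 0} {hcd : ![c, d] ≠ 0} :
    g • pt k a b hab = pt k c d hcd ↔ ∃ s : k, s • ![c, d] = g ![a, b] :=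
  mk_eq_mk_iff' k _ _ _ _

section

variable {V : Type*} [AddCommGroup V] [Module k V]

lemma mk_eq_iff_exists_smul_rep {v : V} (hv : v ≠ 0) (p : ℙ k V) :
    mk k v hv = p ↔ ∃ s : k, s • p.rep = v := by
  rw [← mk_eq_mk_iff' k v p.rep hv p.rep_nonzero, mk_rep]

lemma eq_of_rep_eq_smul_rep {p q : ℙ k V} {s : k} (h : p.rep = s • q.rep) : p = q :=
  (mk_rep p).symm.trans ((mk_eq_iff_exists_smul_rep _ q).2 ⟨s, h.symm⟩)

lemma exists_linearEquiv_map_pt_eq (hV : finrank k V = 2) {p₀ p₁ p₂ : ℙ k V}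
    (h₀₁ : p₀ ≠ p₁) (h₀₂ : p₀ ≠ p₂) (h₁₂ : p₁ ≠ p₂) :
    ∃ g : (Fin 2 → k) ≃ₗ[k] V,
      map g.toLinearMap g.injective (pt k 1 0 (by simp)) = p₀ ∧
      map g.toLinearMap g.injective (pt k 0 1 (by simp)) = p₁ ∧
      map g.toLinearMap g.injective (pt k 1 1 (by simp)) = p₂ := by
  have hli := linearIndependent_pair_iff_ne.2 h₀₁
  let b := basisOfLinearIndependentOfCardEqFinrank hli (by simp [hV])
  have hb : ∀ i, b i = ![p₀.rep, p₁.rep] i := fun i => by simp [b]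
  set c := b.equivFun p₂.rep
  have hp₂ : p₂.rep = c 0 • p₀.rep + c 1 • p₁.rep := by
    rw [← b.equivFun.symm_apply_apply p₂.rep, Basis.equivFun_symm_apply, Fin.sum_univ_two,
      hb, hb]
    rfl
  have hc : ∀ i, c i ≠ 0 := Fin.forall_fin_two.2
    ⟨fun h => h₁₂ (eq_of_rep_eq_smul_rep (s := c 1) (by simpa [h] using hp₂)).symm,
     fun h => h₀₂ (eq_of_rep_eq_smul_rep (s := c 0) (by simpa [h] using hp₂)).symm⟩
  let b' := b.unitsSMul (fun i => Units.mk0 (c i) (hc i))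
  refine ⟨b'.equivFun.symm, ?_, ?_, ?_⟩ <;>
    simp only [pt, map_mk, mk_eq_iff_exists_smul_rep, LinearEquiv.coe_coe,
      Basis.equivFun_symm_apply, Fin.sum_univ_two, b', Basis.unitsSMul_apply, hb]
  · exact ⟨c 0, by simp⟩
  · exact ⟨c 1, by simp⟩
  · exact ⟨1, by simp [hp₂]⟩

end

lemma exists_apply_eq_smul_of_smul_pt_eq_self (g : (Fin 2 → k) ≃ₗ[k] (Fin 2 → k))
    (h₀ : g • pt k 1 0 (by simp) = pt k 1 0 (by simp))
    (h₁ : g • pt k 0 1 (by simp) = pt k 0 1 (by simp))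
    (h₂ : g • pt k 1 1 (by simp) = pt k 1 1 (by simp)) :
    ∃ a : k, ∀ v, g v = a • v := by
  obtain ⟨a, ha⟩ := (linearEquiv_smul_pt_eq_pt_iff g).1 h₀
  obtain ⟨b, hb⟩ := (linearEquiv_smul_pt_eq_pt_iff g).1 h₁
  obtain ⟨c, hc⟩ := (linearEquiv_smul_pt_eq_pt_iff g).1 h₂
  have hg : ∀ v, g v = v 0 • a • ![1, 0] + v 1 • b • ![0, 1] := by
    intro v
    have hv : v = v 0 • ![1, 0] + v 1 • ![0, 1] := by ext i; fin_cases i <;> simp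
    rw [ha, hb, ← map_smul, ← map_smul, ← map_add, ← hv]
  have hab : a = b := by
    have h := hc.trans (hg ![1, 1])
    have e₀ : c = a := by simpa using congrFun h 0
    have e₁ : c = b := by simpa using congrFun h 1
    exact e₀.symm.trans e₁
  refine ⟨a, fun v => ?_⟩
  rw [hg, ← hab]
  ext i; fin_cases i <;> simp [mul_comm]

lemma eq_of_sameOrbit_stdTuple {α β : k} (h : sameOrbit k (stdTuple k α) (stdTuple k β)) :
    α = β := by
  obtain ⟨g, hg⟩ := h
  obtain ⟨a, ha⟩ := exists_apply_eq_smul_of_smul_pt_eq_self g (hg 0) (hg 1) (hg 2)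
  have h₃ : g • stdTuple k α 3 = stdTuple k α 3 :=
    (linearEquiv_smul_pt_eq_pt_iff g).2 ⟨a, (ha _).symm⟩
  simpa using (mul_eq_mul_of_pt_eq_pt ((hg 3).symm.trans h₃)).symm

lemma exists_pt_eq_of_ne (q : ProjLine k) (h₀ : q ≠ pt k 1 0 (by simp))
    (h₁ : q ≠ pt k 0 1 (by simp)) (h₂ : q ≠ pt k 1 1 (by simp)) :
    ∃ α : k, (α ≠ 0 ∧ α ≠ 1) ∧ pt k α 1 (by simp) = q := by
  induction q using Projectivization.ind with
  | h v hv =>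
    have hv₁ : v 1 ≠ 0 := by
      refine fun hv₁ => h₀ ((mk_eq_mk_iff' k _ _ _ _).2 ⟨v 0, ?_⟩)
      ext i; fin_cases i <;> simp [hv₁]
    have hα : pt k (v 0 / v 1) 1 (by simp) = mk k v hv := by
      refine (mk_eq_mk_iff' k _ _ _ _).2 ⟨(v 1)⁻¹, ?_⟩
      ext i; fin_cases i <;> simp [div_eq_inv_mul, hv₁]
    refine ⟨v 0 / v 1, ⟨fun h => h₁ ?_, fun h => h₂ ?_⟩, hα⟩ <;> rw [← hα] <;> congr

lemma exists_sameOrbit_stdTuple {t : Fin 4 → ProjLine k} (ht : Function.Injective t) :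
    ∃ α : k, (α ≠ 0 ∧ α ≠ 1) ∧ sameOrbit k (stdTuple k α) t := by
  obtain ⟨g, h₀, h₁, h₂⟩ := exists_linearEquiv_map_pt_eq (finrank_fin_fun k)
    (ht.ne (by decide : (0 : Fin 4) ≠ 1)) (ht.ne (by decide : (0 : Fin 4) ≠ 2))
    (ht.ne (by decide : (1 : Fin 4) ≠ 2))
  change g • _ = (_ : ProjLine k) at h₀ h₁ h₂
  obtain ⟨α, hα, h₃⟩ := exists_pt_eq_of_ne (g⁻¹ • t 3)
    (fun h => ht.ne (by decide : (3 : Fin 4) ≠ 0) ((inv_smul_eq_iff.1 h).trans h₀))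
    (fun h => ht.ne (by decide : (3 : Fin 4) ≠ 1) ((inv_smul_eq_iff.1 h).trans h₁))
    (fun h => ht.ne (by decide : (3 : Fin 4) ≠ 2) ((inv_smul_eq_iff.1 h).trans h₂))
  refine ⟨α, hα, g, fun i => ?_⟩
  fin_cases i
  exacts [h₀, h₁, h₂, (congrArg (g • ·) h₃).trans (smul_inv_smul g (t 3))]

end

/-- The map sending `α ∈ k∖{0,1}` to the `GL₂(k)`-orbit of
`([1:0], [0:1], [1:1], [α:1])` is a bijection from `k∖{0,1}` onto the set of
`GL₂(k)`-orbits of `4`-tuples of pairwise distinct points of `ℙ¹(k)`. -/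
theorem orbits_of_distinct_quadruples (k : Type) [Field k] :
    Set.BijOn (fun α : k => Quot.mk (sameOrbit k) (stdTuple k α))
      {α : k | α ≠ 0 ∧ α ≠ 1}
      {q : Quot (sameOrbit k) |
        ∃ t : Fin 4 → ProjLine k, Function.Injective t ∧ Quot.mk (sameOrbit k) t = q} := by
  refine ⟨fun α hα => ⟨stdTuple k α, stdTuple_injective hα.1 hα.2, rfl⟩,
    fun α _ β _ h => eq_of_sameOrbit_stdTuple (quot_mk_eq_iff_sameOrbit.1 h), ?_⟩
  rintro q ⟨t, ht, rfl⟩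
  obtain ⟨α, hα, horb⟩ := exists_sameOrbit_stdTuple ht
  exact ⟨α, hα, quot_mk_eq_iff_sameOrbit.2 horb⟩

end
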